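/- arXiv:1810.05251 — 3 statements merged into one kernel-verified Lean document; each statement's English description precedes it below -/
import Mathlib

section
/- Let A be a nonzero m×n real matrix and b ∈ ℝᵐ such that the polyhedron S = {y ∈ ℝⁿ : (Ay)_i ≤ b_i for all i} is nonempty. Then for every x ∈ ℝⁿ and every stepsize α ≥ 0, one step of the doubly stochastic alternating projection algorithm satisfies Σ_{i=1}^{m} Σ_{j=1}^{n} p_{ij} dist(x⁺(i,j), S)² ≤ dist(x, S)² + ((n·α² − 2α)/‖A‖_F²)·‖(Ax − b)₊‖², where dist(·, S) is the Euclidean distance to S. (Intermediate bound in the proof of Theorem 4.) -/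
/-!
Let `y` be a nearest point of `S` to `x`. If row `i` is violated by `r = ((A x)_i - b_i)₊ > 0`
and `a_ij ≠ 0`, the step moves `x` by `-(α r / a_ij) e_j`, so
`a_ij² ‖x⁺ - y‖² = a_ij² ‖x - y‖² - 2 α r a_ij (x_j - y_j) + α² r²`.
Summing over `j` turns the middle term into `-2 α r (A(x - y))_i ≤ -2 α r²`, because
`(A y)_i ≤ b_i`; summing over `i` and using `dist(x⁺, S) ≤ ‖x⁺ - y‖` gives the bound.
-/

open Matrix BigOperators

/-- Squared Frobenius norm of a matrix. -/
noncomputable def frobSq {m n : ℕ} (A : Matrix (Fin m) (Fin n) ℝ) : ℝ :=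
  ∑ i, ∑ j, (A i j) ^ 2

/-- One step of the doubly stochastic alternating projection algorithm (Algorithm 2):
if the selected inequality `i` is satisfied, nothing changes; otherwise coordinate `j`
is updated via the Gauss–Seidel rule (with the convention `x⁺ = x` when `A i j = 0`). -/
noncomputable def dsapStep {m n : ℕ} (A : Matrix (Fin m) (Fin n) ℝ) (b : Fin m → ℝ)
    (α : ℝ) (x : EuclideanSpace ℝ (Fin n)) (i : Fin m) (j : Fin n) :
    EuclideanSpace ℝ (Fin n) :=
  if A.mulVec x i ≤ b i then x
  else if A i j = 0 then x
  else WithLp.toLp 2 (Function.update x j (x j + α * ((b i - A.mulVec x i) / A i j)))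

/-- The componentwise positive part `(A x - b)₊` of the residual. -/
noncomputable def posRes {m n : ℕ} (A : Matrix (Fin m) (Fin n) ℝ) (b : Fin m → ℝ)
    (x : EuclideanSpace ℝ (Fin n)) : EuclideanSpace ℝ (Fin m) :=
  WithLp.toLp 2 (fun i => max 0 (A.mulVec x i - b i))

theorem EuclideanSpace.dist_sub_single_sq {ι : Type*} [Fintype ι] [DecidableEq ι]
    (x y : EuclideanSpace ℝ ι) (j : ι) (t : ℝ) :
    dist (x - EuclideanSpace.single j t) y ^ 2 = dist x y ^ 2 - 2 * t * (x j - y j) + t ^ 2 := by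
  rw [dist_eq_norm, dist_eq_norm, sub_right_comm, norm_sub_sq_real,
    EuclideanSpace.inner_single_right, PiLp.norm_single, Real.norm_eq_abs, sq_abs]
  simp only [PiLp.sub_apply, conj_trivial]
  ring

theorem isClosed_setOf_mulVec_le {ι κ : Type*} [Fintype κ] (A : Matrix ι κ ℝ)
    (b : ι → ℝ) :
    IsClosed {y : EuclideanSpace ℝ κ | ∀ i, (A *ᵥ y) i ≤ b i} := by
  simp only [Set.ofPred_forall]
  exact isClosed_iInter fun i => isClosed_le
    ((continuous_apply i).comp (continuous_const.matrix_mulVec (PiLp.continuous_ofLp 2 _)))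
    continuous_const

theorem sq_max_zero_sub_le_mul {u v b : ℝ} (hv : v ≤ b) :
    max 0 (u - b) ^ 2 ≤ max 0 (u - b) * (u - v) := by
  rcases le_total (u - b) 0 with h | h
  · simp [max_eq_left h]
  · rw [max_eq_right h, sq]
    exact mul_le_mul_of_nonneg_left (by linarith) h

section dsapStep

variable {m n : ℕ} (A : Matrix (Fin m) (Fin n) ℝ) (b : Fin m → ℝ) (α : ℝ)
  (x : EuclideanSpace ℝ (Fin n))

theorem posRes_apply (i : Fin m) : posRes A b x i = max 0 ((A *ᵥ x) i - b i) := rfl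

theorem norm_posRes_sq : ‖posRes A b x‖ ^ 2 = ∑ i, posRes A b x i ^ 2 := by
  simp only [EuclideanSpace.norm_sq_eq, Real.norm_eq_abs, sq_abs]

theorem dsapStep_eq_sub_single {i : Fin m} {j : Fin n} (hij : A i j ≠ 0) :
    dsapStep A b α x i j = x - EuclideanSpace.single j (α * posRes A b x i / A i j) := by
  unfold dsapStep
  split_ifs with hsat
  · ext k
    simp [posRes_apply, max_eq_left (sub_nonpos.mpr hsat)]
  · rw [posRes_apply, max_eq_right (by linarith [not_le.mp hsat])]
    ext k
    rcases eq_or_ne k j with rfl | hkj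
    · simp only [Function.update_self, PiLp.sub_apply, PiLp.single_eq_same]
      ring
    · simp [hkj]

theorem sq_mul_dist_dsapStep_sq_le (y : EuclideanSpace ℝ (Fin n)) (i : Fin m) (j : Fin n) :
    A i j ^ 2 * dist (dsapStep A b α x i j) y ^ 2 ≤
      A i j ^ 2 * dist x y ^ 2 - 2 * α * posRes A b x i * (A i j * (x j - y j)) +
        α ^ 2 * posRes A b x i ^ 2 := by
  by_cases hij : A i j = 0
  · simp [hij]
    positivity
  · rw [dsapStep_eq_sub_single A b α x hij, EuclideanSpace.dist_sub_single_sq]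
    apply le_of_eq
    field_simp

theorem sum_sq_mul_dist_dsapStep_sq_le (hα : 0 ≤ α) {y : EuclideanSpace ℝ (Fin n)}
    (hy : ∀ i, (A *ᵥ y) i ≤ b i) (i : Fin m) :
    ∑ j, A i j ^ 2 * dist (dsapStep A b α x i j) y ^ 2 ≤
      (∑ j, A i j ^ 2) * dist x y ^ 2 + ((n : ℝ) * α ^ 2 - 2 * α) * posRes A b x i ^ 2 := by
  have hrow : ∑ j, A i j * (x j - y j) = (A *ᵥ x) i - (A *ᵥ y) i := by
    simp only [mul_sub, Finset.sum_sub_distrib, mulVec, dotProduct]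
  have hdecrease : posRes A b x i ^ 2 ≤ posRes A b x i * ((A *ᵥ x) i - (A *ᵥ y) i) :=
    sq_max_zero_sub_le_mul (hy i)
  calc ∑ j, A i j ^ 2 * dist (dsapStep A b α x i j) y ^ 2
      ≤ ∑ j, (A i j ^ 2 * dist x y ^ 2 - 2 * α * posRes A b x i * (A i j * (x j - y j)) +
          α ^ 2 * posRes A b x i ^ 2) :=
        Finset.sum_le_sum fun j _ => sq_mul_dist_dsapStep_sq_le A b α x y i j
    _ = (∑ j, A i j ^ 2) * dist x y ^ 2 -
          2 * α * (posRes A b x i * ((A *ᵥ x) i - (A *ᵥ y) i)) +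
          n * α ^ 2 * posRes A b x i ^ 2 := by
        simp only [Finset.sum_add_distrib, Finset.sum_sub_distrib, ← Finset.sum_mul,
          ← Finset.mul_sum, hrow, Finset.sum_const, Finset.card_univ, Fintype.card_fin,
          nsmul_eq_mul]
        ring
    _ ≤ _ := by
        linarith [mul_le_mul_of_nonneg_left hdecrease (by positivity : (0 : ℝ) ≤ 2 * α)]

theorem sum_sum_sq_mul_dist_dsapStep_sq_le (hα : 0 ≤ α) {y : EuclideanSpace ℝ (Fin n)}
    (hy : ∀ i, (A *ᵥ y) i ≤ b i) :
    ∑ i, ∑ j, A i j ^ 2 * dist (dsapStep A b α x i j) y ^ 2 ≤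
      frobSq A * dist x y ^ 2 + ((n : ℝ) * α ^ 2 - 2 * α) * ‖posRes A b x‖ ^ 2 := by
  calc _ ≤ ∑ i, ((∑ j, A i j ^ 2) * dist x y ^ 2 +
          ((n : ℝ) * α ^ 2 - 2 * α) * posRes A b x i ^ 2) :=
        Finset.sum_le_sum fun i _ => sum_sq_mul_dist_dsapStep_sq_le A b α x hα hy i
    _ = _ := by
        rw [Finset.sum_add_distrib, ← Finset.sum_mul, ← Finset.mul_sum, norm_posRes_sq, frobSq]

end dsapStep

theorem dsap_dist_intermediate_bound_general {m n : ℕ} (A : Matrix (Fin m) (Fin n) ℝ)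
    (b : Fin m → ℝ)
    (S : Set (EuclideanSpace ℝ (Fin n)))
    (hS : S = {y : EuclideanSpace ℝ (Fin n) | ∀ i, A.mulVec y i ≤ b i})
    (hS_ne : S.Nonempty)
    (x : EuclideanSpace ℝ (Fin n)) (α : ℝ) (hα : 0 ≤ α) :
    ∑ i, ∑ j, ((A i j) ^ 2 / frobSq A) * (Metric.infDist (dsapStep A b α x i j) S) ^ 2 ≤
      (Metric.infDist x S) ^ 2 +
        (((n : ℝ) * α ^ 2 - 2 * α) / frobSq A) * ‖posRes A b x‖ ^ 2 := by
  obtain ⟨y, hyS, hxy⟩ :=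
    (hS ▸ isClosed_setOf_mulVec_le A b : IsClosed S).exists_infDist_eq_dist hS_ne x
  have hy : ∀ i, (A *ᵥ y) i ≤ b i := by rwa [hS] at hyS
  have hF : 0 ≤ frobSq A := by unfold frobSq; positivity
  calc _ = (∑ i, ∑ j, A i j ^ 2 * Metric.infDist (dsapStep A b α x i j) S ^ 2) / frobSq A := by
        simp only [Finset.sum_div, div_mul_eq_mul_div]
    _ ≤ (∑ i, ∑ j, A i j ^ 2 * dist (dsapStep A b α x i j) y ^ 2) / frobSq A := by
        gcongr with i _ j _
        exacts [Metric.infDist_nonneg, Metric.infDist_le_dist_of_mem hyS]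
    _ ≤ (frobSq A * dist x y ^ 2 + ((n : ℝ) * α ^ 2 - 2 * α) * ‖posRes A b x‖ ^ 2) /
          frobSq A := by
        gcongr
        exact sum_sum_sq_mul_dist_dsapStep_sq_le A b α x hα hy
    _ = frobSq A / frobSq A * dist x y ^ 2 +
          ((n : ℝ) * α ^ 2 - 2 * α) / frobSq A * ‖posRes A b x‖ ^ 2 := by ring
    _ ≤ _ := by
        rw [← hxy]
        exact add_le_add_left (mul_le_of_le_one_left (sq_nonneg _) (div_self_le_one _)) _

/-- intermediate bound in the proof of Theorem 4: if the polyhedron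
`S = {y : A y ≤ b}` is nonempty, then for every `x` and every stepsize `α ≥ 0`, one step
of the doubly stochastic alternating projection algorithm satisfies
`E[dist(x⁺, S)²] ≤ dist(x, S)² + ((n α² - 2α)/‖A‖_F²) ‖(A x - b)₊‖²`. -/
theorem dsap_dist_intermediate_bound {m n : ℕ} (A : Matrix (Fin m) (Fin n) ℝ)
    (hA : A ≠ 0) (b : Fin m → ℝ)
    (S : Set (EuclideanSpace ℝ (Fin n)))
    (hS : S = {y : EuclideanSpace ℝ (Fin n) | ∀ i, A.mulVec y i ≤ b i})
    (hS_ne : S.Nonempty)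
    (x : EuclideanSpace ℝ (Fin n)) (α : ℝ) (hα : 0 ≤ α) :
    ∑ i, ∑ j, ((A i j) ^ 2 / frobSq A) * (Metric.infDist (dsapStep A b α x i j) S) ^ 2 ≤
      (Metric.infDist x S) ^ 2 +
        (((n : ℝ) * α ^ 2 - 2 * α) / frobSq A) * ‖posRes A b x‖ ^ 2 :=
  dsap_dist_intermediate_bound_general A b S hS hS_ne x α hα
end

section
/- Let f₁, …, f_m : ℝⁿ → ℝ be differentiable functions with gradients ∇f_i, such that: (a) f_i(y) ≥ 0 for all y and all i; (b) each ∇f_i is Lipschitz with constant L_i ≥ 0, i.e., ‖∇f_i(y) − ∇f_i(z)‖ ≤ L_i·‖y − z‖ for all y, z; and set f = Σ_{i=1}^m f_i. Fix x ∈ ℝⁿ and suppose there exist x* ∈ ℝⁿ and γ > 0 with f(x*) = 0 and the quasi strong convexity bound f(x) − f(x*) ≤ ⟨∇f(x), x − x*⟩ − (γ/2)‖x − x*‖². Let the stepsize α > 0 satisfy 2·α·(Σ_{ℓ=1}^m L_ℓ)·(Σ_{i=1}^m L_i²) ≤ γ². For each pair (i,j) ∈ [m]×[n], define x⁺(i,j)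 ∈ ℝⁿ by x⁺(i,j)_j = x_j − α·(∇f_i(x))_j and x⁺(i,j)_k = x_k for k ≠ j. Then (1/(m·n))·Σ_{i=1}^m Σ_{j=1}^n f(x⁺(i,j)) ≤ (1 − α·γ/(m·n))·f(x). (Theorem 5: linear convergence of the doubly stochastic gradient algorithm.) -/
/-!
Each coordinate step is controlled by the descent lemma for `f = ∑ fᵢ`, whose gradient `∑ ∇fᵢ`
is `(∑ Lᵢ)`-Lipschitz. Summed over all pairs `(i, j)`, the first-order terms add up to
`-α ‖∇f(x)‖²` and the second-order terms to `(∑ Lℓ) α² ∑ ‖∇fᵢ(x)‖² / 2`. Since `x*` minimizes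
every `fᵢ`, `∇fᵢ(x*) = 0`, so `‖∇fᵢ(x)‖ ≤ Lᵢ ‖x - x*‖`. Quasi strong convexity and Cauchy–Schwarz
give `f(x) ≤ ‖∇f(x)‖ ‖x - x*‖ - γ/2 ‖x - x*‖²`, and by the step-size condition the second-order
error is then absorbed by completing the square in `‖∇f(x)‖ - γ ‖x - x*‖ / 2`.
-/

open Finset
open scoped RealInnerProductSpace

section Gradient

variable {E : Type*} [NormedAddCommGroup E] [InnerProductSpace ℝ E] [CompleteSpace E]

theorem IsLocalMin.hasGradientAt_eq_zero {f : E → ℝ} {g a : E} (h : IsLocalMin f a)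
    (hg : HasGradientAt f g a) : g = 0 := by
  simpa using (InnerProductSpace.toDual ℝ E).map_eq_zero_iff.mp
    (h.hasFDerivAt_eq_zero hg.hasFDerivAt)

theorem norm_gradient_le_of_lipschitz_of_nonneg {f : E → ℝ} {g : E → E} {L : ℝ} {xstar : E}
    (hg : ∀ y, HasGradientAt f (g y) y) (hnonneg : ∀ y, 0 ≤ f y)
    (hlip : ∀ y z, ‖g y - g z‖ ≤ L * ‖y - z‖) (hzero : f xstar = 0) (x : E) :
    ‖g x‖ ≤ L * ‖x - xstar‖ := by
  have hmin : IsLocalMin f xstar := Filter.Eventually.of_forall fun y ↦ hzero ▸ hnonneg y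
  simpa [hmin.hasGradientAt_eq_zero (hg xstar)] using hlip x xstar

theorem HasGradientAt.sum {ι : Type*} {u : Finset ι} {f : ι → E → ℝ} {g : ι → E} {x : E}
    (h : ∀ i ∈ u, HasGradientAt (f i) (g i) x) :
    HasGradientAt (fun y ↦ ∑ i ∈ u, f i y) (∑ i ∈ u, g i) x := by
  rw [hasGradientAt_iff_hasFDerivAt, map_sum]
  exact HasFDerivAt.fun_sum h

variable {f : E → ℝ} {g : E → E} {L : ℝ}

theorem apply_add_le_of_lipschitz_gradient (hg : ∀ y, HasGradientAt f (g y) y)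
    (hlip : ∀ y z, ‖g y - g z‖ ≤ L * ‖y - z‖) (a v : E) :
    f (a + v) ≤ f a + ⟪g a, v⟫ + L / 2 * ‖v‖ ^ 2 := by
  have hφ (s : ℝ) : HasDerivAt (fun s ↦ f (a + s • v)) ⟪g (a + s • v), v⟫ s := by
    have h := (hg (a + s • v)).hasFDerivAt.comp_hasDerivAt s
      (((hasDerivAt_id s).smul_const v).const_add a)
    simp only [InnerProductSpace.toDual_apply_apply, one_smul] at h
    exact h
  have hB (s : ℝ) : HasDerivAt (fun s ↦ f a + s * ⟪g a, v⟫ + L / 2 * s ^ 2 * ‖v‖ ^ 2)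
      (⟪g a, v⟫ + L * s * ‖v‖ ^ 2) s := by
    refine ((((hasDerivAt_id s).mul_const ⟪g a, v⟫).const_add (f a)).add
      (((hasDerivAt_pow 2 s).const_mul (L / 2)).mul_const (‖v‖ ^ 2))).congr_deriv ?_
    push_cast; ring
  have hbound (s : ℝ) (hs : 0 ≤ s) : ⟪g (a + s • v), v⟫ ≤ ⟪g a, v⟫ + L * s * ‖v‖ ^ 2 :=
    calc ⟪g (a + s • v), v⟫ = ⟪g a, v⟫ + ⟪g (a + s • v) - g a, v⟫ := by
          rw [inner_sub_left]; ring
      _ ≤ ⟪g a, v⟫ + ‖g (a + s • v) - g a‖ * ‖v‖ := by gcongr; exact real_inner_le_norm _ _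
      _ ≤ ⟪g a, v⟫ + L * ‖s • v‖ * ‖v‖ := by
          gcongr; simpa using hlip (a + s • v) a
      _ = ⟪g a, v⟫ + L * s * ‖v‖ ^ 2 := by rw [norm_smul, Real.norm_of_nonneg hs]; ring
  have := image_le_of_deriv_right_le_deriv_boundary (a := 0) (b := 1)
    (fun s _ ↦ (hφ s).continuousAt.continuousWithinAt) (fun s _ ↦ (hφ s).hasDerivWithinAt)
    (by simp) (fun s _ ↦ (hB s).continuousAt.continuousWithinAt)
    (fun s _ ↦ (hB s).hasDerivWithinAt) (fun s hs ↦ hbound s hs.1)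
    (Set.right_mem_Icc.2 zero_le_one)
  simpa using this

end Gradient

theorem norm_sum_sub_sum_le_of_lipschitz {ι E F : Type*} [SeminormedAddCommGroup E]
    [SeminormedAddCommGroup F] (u : Finset ι) {g : ι → E → F} {L : ι → ℝ}
    (hlip : ∀ i y z, ‖g i y - g i z‖ ≤ L i * ‖y - z‖) (y z : E) :
    ‖∑ i ∈ u, g i y - ∑ i ∈ u, g i z‖ ≤ (∑ i ∈ u, L i) * ‖y - z‖ := by
  rw [← sum_sub_distrib, sum_mul]
  exact (norm_sum_le _ _).trans (sum_le_sum fun i _ ↦ hlip i y z)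

section Coordinate

variable {ι : Type*} [DecidableEq ι]

theorem toLp_update_eq_add_single {𝕜 : Type*} [RCLike 𝕜] (x : EuclideanSpace 𝕜 ι) (j : ι)
    (c : 𝕜) :
    WithLp.toLp 2 (Function.update x.ofLp j c) = x + EuclideanSpace.single j (c - x j) := by
  ext k
  by_cases hk : k = j <;> simp [hk]

variable [Fintype ι] {f : EuclideanSpace ℝ ι → ℝ} {g : EuclideanSpace ℝ ι → EuclideanSpace ℝ ι}
  {L : ℝ}

theorem apply_update_le_of_lipschitz_gradient (hg : ∀ y, HasGradientAt f (g y) y)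
    (hlip : ∀ y z, ‖g y - g z‖ ≤ L * ‖y - z‖) (x : EuclideanSpace ℝ ι) (j : ι) (c : ℝ) :
    f (WithLp.toLp 2 (Function.update x.ofLp j (x j + c))) ≤ f x + c * g x j + L / 2 * c ^ 2 := by
  simpa [toLp_update_eq_add_single, EuclideanSpace.inner_single_right]
    using apply_add_le_of_lipschitz_gradient hg hlip x (EuclideanSpace.single j c)

theorem sum_apply_update_sub_le_of_lipschitz_gradient (hg : ∀ y, HasGradientAt f (g y) y)
    (hlip : ∀ y z, ‖g y - g z‖ ≤ L * ‖y - z‖) (x d : EuclideanSpace ℝ ι) (α : ℝ) :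
    ∑ j, f (WithLp.toLp 2 (Function.update x.ofLp j (x j - α * d j))) ≤
      Fintype.card ι * f x - α * ⟪d, g x⟫ + L / 2 * α ^ 2 * ‖d‖ ^ 2 := by
  calc _ ≤ ∑ j, (f x + -(α * d j) * g x j + L / 2 * (-(α * d j)) ^ 2) := by
        gcongr with j
        simpa only [sub_eq_add_neg]
          using apply_update_le_of_lipschitz_gradient hg hlip x j (-(α * d j))
    _ = _ := by
        rw [EuclideanSpace.real_norm_sq_eq, PiLp.inner_apply, mul_sum, mul_sum, ← card_univ,
          ← nsmul_eq_mul, ← sum_const, ← sum_sub_distrib, ← sum_add_distrib]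
        refine sum_congr rfl fun j _ ↦ ?_
        simp only [RCLike.inner_apply, conj_trivial]
        ring

theorem sum_sum_apply_update_sub_le_of_lipschitz_gradient {κ : Type*} [Fintype κ]
    (hg : ∀ y, HasGradientAt f (g y) y) (hlip : ∀ y z, ‖g y - g z‖ ≤ L * ‖y - z‖)
    (x : EuclideanSpace ℝ ι) (d : κ → EuclideanSpace ℝ ι) (α : ℝ) :
    ∑ i, ∑ j, f (WithLp.toLp 2 (Function.update x.ofLp j (x j - α * d i j))) ≤
      Fintype.card κ * Fintype.card ι * f x - α * ⟪∑ i, d i, g x⟫ +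
        L / 2 * α ^ 2 * ∑ i, ‖d i‖ ^ 2 := by
  calc _ ≤ ∑ i, (Fintype.card ι * f x - α * ⟪d i, g x⟫ + L / 2 * α ^ 2 * ‖d i‖ ^ 2) :=
        sum_le_sum fun i _ ↦ sum_apply_update_sub_le_of_lipschitz_gradient hg hlip x (d i) α
    _ = _ := by
        simp only [sum_add_distrib, sum_sub_distrib, sum_inner, ← mul_sum, sum_const, card_univ,
          nsmul_eq_mul]
        ring

end Coordinate

theorem one_div_mul_le_of_le_sub_mul {a b c F : ℝ} (hF : 0 ≤ F) (ha : 0 ≤ a)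
    (h : b ≤ (a - c) * F) : 1 / a * b ≤ (1 - c / a) * F := by
  rcases ha.eq_or_lt with rfl | ha
  · simpa using hF
  rw [one_div_mul_eq_div, one_sub_div ha.ne', div_mul_eq_mul_div, div_le_div_iff_of_pos_right ha]
  exact h

-- Here `N = ‖∇f(x)‖` and `t = ‖x - x*‖`.
theorem quasi_strong_convexity_gain {F N t γ α S Q : ℝ} (hα : 0 ≤ α) (hγ : 0 ≤ γ)
    (hF : F ≤ N * t - γ / 2 * t ^ 2) (hstep : 2 * α * S * Q ≤ γ ^ 2) :
    S / 2 * α ^ 2 * (Q * t ^ 2) ≤ α * N ^ 2 - α * γ * F := by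
  nlinarith [mul_nonneg hα (sq_nonneg (N - γ * t / 2)),
    mul_le_mul_of_nonneg_left hF (mul_nonneg hα hγ),
    mul_le_mul_of_nonneg_right hstep (mul_nonneg hα (sq_nonneg t))]

/-- Theorem 5: linear convergence of the doubly stochastic gradient
algorithm. With `f = Σᵢ fᵢ`, where each `fᵢ : ℝⁿ → ℝ` is nonnegative with `Lᵢ`-Lipschitz
gradient `gᵢ`, if `f(x*) = 0`, `f` is quasi strongly convex at `x` towards `x*` with
modulus `γ > 0`, and the stepsize `α > 0` satisfies `2 α (Σ Lℓ)(Σ Lᵢ²) ≤ γ²`, then the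
expected value of `f` after one doubly stochastic gradient step from `x` is at most
`(1 - αγ/(mn)) f(x)`. -/
theorem dsg_linear_rate {m n : ℕ}
    (f : Fin m → EuclideanSpace ℝ (Fin n) → ℝ)
    (g : Fin m → EuclideanSpace ℝ (Fin n) → EuclideanSpace ℝ (Fin n))
    (hgrad : ∀ i y, HasGradientAt (f i) (g i y) y)
    (hnonneg : ∀ i y, 0 ≤ f i y)
    (L : Fin m → ℝ) (hL : ∀ i, 0 ≤ L i)
    (hlip : ∀ i y z, ‖g i y - g i z‖ ≤ L i * ‖y - z‖)
    (x xstar : EuclideanSpace ℝ (Fin n)) (γ : ℝ) (hγ : 0 < γ)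
    (hmin : ∑ i, f i xstar = 0)
    (hqsc : ∑ i, f i x - ∑ i, f i xstar ≤
      (inner ℝ (∑ i, g i x) (x - xstar) : ℝ) - γ / 2 * ‖x - xstar‖ ^ 2)
    (α : ℝ) (hα : 0 < α)
    (hstep : 2 * α * (∑ l, L l) * (∑ i, L i ^ 2) ≤ γ ^ 2) :
    (1 / ((m : ℝ) * n)) *
        ∑ i, ∑ j, (∑ l, f l (WithLp.toLp 2 (Function.update x j (x j - α * g i x j)))) ≤
      (1 - α * γ / ((m : ℝ) * n)) * ∑ i, f i x := by
  have hzero (i : Fin m) : f i xstar = 0 :=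
    (sum_eq_zero_iff_of_nonneg fun i _ ↦ hnonneg i xstar).1 hmin i (mem_univ i)
  have hgrad_le (i : Fin m) : ‖g i x‖ ≤ L i * ‖x - xstar‖ :=
    norm_gradient_le_of_lipschitz_of_nonneg (hgrad i) (hnonneg i) (hlip i) (hzero i) x
  have hsteps := sum_sum_apply_update_sub_le_of_lipschitz_gradient
    (fun y ↦ HasGradientAt.sum fun i _ ↦ hgrad i y) (norm_sum_sub_sum_le_of_lipschitz univ hlip)
    x (fun i ↦ g i x) α
  simp only [Fintype.card_fin, real_inner_self_eq_norm_sq] at hsteps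
  have hgrad_sq : ∑ i, ‖g i x‖ ^ 2 ≤ (∑ i, L i ^ 2) * ‖x - xstar‖ ^ 2 := by
    rw [sum_mul]
    gcongr with i
    rw [← mul_pow]
    exact pow_le_pow_left₀ (norm_nonneg _) (hgrad_le i) 2
  have hqsc' : ∑ i, f i x ≤ ‖∑ i, g i x‖ * ‖x - xstar‖ - γ / 2 * ‖x - xstar‖ ^ 2 := by
    rw [hmin, sub_zero] at hqsc
    linarith [real_inner_le_norm (∑ i, g i x) (x - xstar)]
  have hgain := quasi_strong_convexity_gain hα.le hγ.le hqsc' hstep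
  have hS : 0 ≤ ∑ l, L l := sum_nonneg fun l _ ↦ hL l
  refine one_div_mul_le_of_le_sub_mul (sum_nonneg fun i _ ↦ hnonneg i x) (by positivity) ?_
  calc _ ≤ _ := hsteps
    _ ≤ (m : ℝ) * n * ∑ i, f i x - α * ‖∑ i, g i x‖ ^ 2 +
          (∑ l, L l) / 2 * α ^ 2 * ((∑ i, L i ^ 2) * ‖x - xstar‖ ^ 2) := by gcongr
    _ ≤ _ := by linarith
end

section
/- Let τ > 1 and 0 < α ≤ 1, and consider the cyclic successive over-relaxation (SOR) iteration for the 2×2 linear system x₁ − τx₂ = 0, −τx₁ + x₂ = 0: given (x₁ʳ, x₂ʳ), set x₁^{r+1} = (1−α)·x₁ʳ + α·τ·x₂ʳ and then x₂^{r+1} = (1−α)·x₂ʳ + α·τ·x₁^{r+1}. If x₁⁰ > 0 and x₂⁰ > 0, then for every r ≥ 0, min{x₁ʳ, x₂ʳ} ≥ (1 + α·(τ−1))ʳ · min{x₁⁰, x₂⁰}. In particular min{x₁ʳ, x₂ʳ} → ∞, so the iterates never approach the unique solution (0,0) of the system. (Example 1: divergence of cyclic SOR on a system that is neither diagonally dominant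 nor positive definite.) -/
open Filter

/-- Example 1: divergence of cyclic SOR on the 2×2 system
`x₁ - τ x₂ = 0`, `-τ x₁ + x₂ = 0` with `τ > 1`: if the cyclic SOR iteration with
stepsize `0 < α ≤ 1` starts from positive initial values, then
`min{x₁ʳ, x₂ʳ} ≥ (1 + α(τ - 1))ʳ · min{x₁⁰, x₂⁰}` for every `r`, and in particular
`min{x₁ʳ, x₂ʳ} → ∞`, so the iterates never approach the unique solution `(0, 0)`. -/
theorem cyclic_sor_diverges (τ α : ℝ) (hτ : 1 < τ) (hα0 : 0 < α) (hα1 : α ≤ 1)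
    (x1 x2 : ℕ → ℝ) (h10 : 0 < x1 0) (h20 : 0 < x2 0)
    (hrec1 : ∀ r, x1 (r + 1) = (1 - α) * x1 r + α * τ * x2 r)
    (hrec2 : ∀ r, x2 (r + 1) = (1 - α) * x2 r + α * τ * x1 (r + 1)) :
    (∀ r, (1 + α * (τ - 1)) ^ r * min (x1 0) (x2 0) ≤ min (x1 r) (x2 r)) ∧
    Tendsto (fun r => min (x1 r) (x2 r)) atTop atTop := by
  set c : ℝ := 1 + α * (τ - 1) with hc
  have hc1 : 1 < c := by
    have : 0 < α * (τ - 1) := mul_pos hα0 (by linarith)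
    linarith
  have hm : 0 < min (x1 0) (x2 0) := lt_min h10 h20
  have key : ∀ r, c ^ r * min (x1 0) (x2 0) ≤ min (x1 r) (x2 r) := by
    intro r
    induction r with
    | zero => simp
    | succ n ih =>
      have hM : 0 < c ^ n * min (x1 0) (x2 0) := mul_pos (pow_pos (by linarith) n) hm
      set M := c ^ n * min (x1 0) (x2 0) with hMdef
      have h1 : M ≤ x1 n := le_trans ih (min_le_left _ _)
      have h2 : M ≤ x2 n := le_trans ih (min_le_right _ _)
      have hτ0 : 0 < α * τ := mul_pos hα0 (by linarith)
      have hstep1 : c * M ≤ x1 (n + 1) := by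
        rw [hrec1]
        have : (1 - α) * M ≤ (1 - α) * x1 n :=
          mul_le_mul_of_nonneg_left h1 (by linarith)
        have h2' : α * τ * M ≤ α * τ * x2 n :=
          mul_le_mul_of_nonneg_left h2 (le_of_lt hτ0)
        nlinarith
      have hstep2 : c * M ≤ x2 (n + 1) := by
        rw [hrec2]
        have ha : (1 - α) * M ≤ (1 - α) * x2 n :=
          mul_le_mul_of_nonneg_left h2 (by linarith)
        have hb : α * τ * (c * M) ≤ α * τ * x1 (n + 1) :=
          mul_le_mul_of_nonneg_left hstep1 (le_of_lt hτ0)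
        have hcM : M ≤ c * M := le_mul_of_one_le_left (le_of_lt hM) (le_of_lt hc1)
        nlinarith
      have : c ^ (n + 1) * min (x1 0) (x2 0) = c * M := by ring
      rw [this]
      exact le_min hstep1 hstep2
  refine ⟨key, ?_⟩
  have htend : Tendsto (fun r : ℕ => c ^ r * min (x1 0) (x2 0)) atTop atTop :=
    (tendsto_pow_atTop_atTop_of_one_lt hc1).atTop_mul_const hm
  exact tendsto_atTop_mono key htend
end
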